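/- Let Q^{(1)}, …, Q^{(n)} be symmetric tropical Metzler matrices of size m, and let F : (ℝ ∪ {−∞})^n → (ℝ ∪ {−∞})^n be the Shapley operator of the associated stochastic mean payoff game, given by F(x)_k = min over pairs (i,j) with Q^{(k)}_{ij} tropically negative of ( −|Q^{(k)}_{ij}| + (1/2)( max over l with Q^{(l)}_{ii} tropically positive of (Q^{(l)}_{ii} + x_l) + max over l with Q^{(l)}_{jj} tropically positive of (Q^{(l)}_{jj} + x_l) ) ). Then for every λ ∈ ℝ, the set S_λ of x ∈ (ℝ ∪ {−∞})^n satisfying: (a) for all i ∈ [m], max over l with Q^{(l)}_{ii} positive of (Q^{(l)}_{ii}+x_l) ≥ λ + max over l with Q^{(l)}_{ii} negative of (|Q^{(l)}_{ii}|+x_l), and (b) for all i < j, max over k with Q^{(k)}_{ii} positive of (Q^{(k)}_{ii}+x_k) + max over k' with Q^{(k')}_{jj} positive of (Q^{(k')}_{jj}+x_{k'}) ≥ 2λ + 2·max_l (|Q^{(l)}_{ij}| + x_l), equals {x : λ + x ≤ F(x)}. -/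

import Mathlib

/-- A signed tropical number: `none` is `-∞`, `some (true, a)` is the tropically
positive number `a`, `some (false, a)` the tropically negative number `⊖a`. -/
abbrev STrop := Option (Bool × ℝ)

/-- Tropically positive part (as an element of `ℝ ∪ {-∞} ⊂ EReal`). -/
noncomputable def posPart : STrop → EReal
  | some (true, a) => (a : EReal)
  | _ => ⊥

/-- Tropically negative part (modulus of a tropically negative number). -/
noncomputable def negPart : STrop → EReal
  | some (false, a) => (a : EReal)
  | _ => ⊥

/-- Modulus of a signed tropical number. -/
noncomputable def absPart : STrop → EReal
  | some (_, a) => (a : EReal)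
  | none => ⊥

/-- Boolean test for tropical negativity. -/
def isNegB : STrop → Bool
  | some (false, _) => true
  | _ => false

/-! With `A i = ⨆ l, Q⁽ˡ⁾ᵢᵢ⁺ + x l` and `B i j = ⨆ l, Q⁽ˡ⁾ᵢⱼ⁻ + x l`, the inequality
`λ + x ≤ F x` unfolds (the minimum in `F` runs over the negative entries, and the other entries
contribute `⊥` to `B`) to `λ + B i j ≤ (A i + A j) / 2` for all pairs `(i, j)`. This family is
symmetric in `(i, j)`, so it splits into the diagonal pairs, which give (a), and the pairs
`i < j`, which give (b) after doubling, since off-diagonal Metzler entries have no positive part. -/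

namespace EReal

lemma coe_add_le_iff_le_neg_add (r : ℝ) {a b : EReal} : (r : EReal) + a ≤ b ↔ a ≤ -r + b := by
  rw [← (addLECancellable_coe r).add_le_add_iff_left (b := a), ← add_assoc, ← coe_neg,
    ← coe_add, add_neg_cancel, coe_zero, zero_add]

lemma coe_add_iSup_le_iff {ι : Sort*} (r : ℝ) (f : ι → EReal) (c : EReal) :
    (r : EReal) + ⨆ i, f i ≤ c ↔ ∀ i, (r : EReal) + f i ≤ c := by
  simp only [coe_add_le_iff_le_neg_add, iSup_le_iff]

lemma add_self_eq_two_mul (u : EReal) : u + u = 2 * u := by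
  rw [← two_nsmul, nsmul_eq_mul, Nat.cast_ofNat]

lemma add_self_le_iff_le_inv_two_mul (u d : EReal) : u + u ≤ d ↔ u ≤ ((2⁻¹ : ℝ) : EReal) * d := by
  have h2 : ((2 : ℝ) : EReal) = 2 := rfl
  rw [add_self_eq_two_mul, mul_comm _ d, coe_inv, h2, ← div_eq_mul_inv,
    le_div_iff_mul_le (by norm_num) (by decide), mul_comm]

lemma inv_two_mul_add_self (u : EReal) : ((2⁻¹ : ℝ) : EReal) * (u + u) = u := by
  have h2 : ((2 : ℝ) : EReal) = 2 := rfl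
  rw [add_self_eq_two_mul, ← mul_assoc, ← h2, ← coe_mul, inv_mul_cancel₀ two_ne_zero,
    coe_one, one_mul]

end EReal

open EReal

lemma absPart_eq_negPart_of_posPart_eq_bot {s : STrop} (h : posPart s = ⊥) :
    absPart s = negPart s := by
  match s with
  | none => rfl
  | some (false, _) => rfl
  | some (true, a) => exact absurd h (coe_ne_bot a)

lemma isNegB_imp_le_neg_absPart_add_iff (s : STrop) (r : ℝ) (y c : EReal) :
    (isNegB s = true → (r : EReal) + y ≤ -absPart s + c) ↔ (r : EReal) + (negPart s + y) ≤ c := by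
  match s with
  | none | some (true, _) => simp [isNegB, _root_.negPart]
  | some (false, a) =>
    simp only [isNegB, _root_.absPart, _root_.negPart, forall_const]
    rw [add_left_comm, coe_add_le_iff_le_neg_add a]

lemma forall_coe_add_le_inf'_neg_absPart_add_iff {ι κ : Type*} [Fintype κ]
    (R : ι → κ → STrop) (hR : ∀ k, (Finset.univ.filter fun p => isNegB (R k p) = true).Nonempty)
    (c : κ → EReal) (r : ℝ) (x : ι → EReal) :
    (∀ k, (r : EReal) + x k ≤ (Finset.univ.filter fun p => isNegB (R k p) = true).inf' (hR k)
        fun p => -absPart (R k p) + c p) ↔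
      ∀ p, (r : EReal) + ⨆ l, negPart (R l p) + x l ≤ c p := by
  simp only [Finset.le_inf'_iff, Finset.mem_filter, Finset.mem_univ, true_and,
    isNegB_imp_le_neg_absPart_add_iff, coe_add_iSup_le_iff]
  exact forall_comm

lemma forall_forall_iff_forall_diag_and_forall_lt {α : Type*} [LinearOrder α] {P : α → α → Prop}
    (hP : Std.Symm P) :
    (∀ i j, P i j) ↔ (∀ i, P i i) ∧ ∀ i j, i < j → P i j := by
  refine ⟨fun h => ⟨fun i => h i i, fun i j _ => h i j⟩, fun ⟨hdiag, hlt⟩ i j => ?_⟩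
  rcases lt_trichotomy i j with hij | rfl | hij
  · exact hlt i j hij
  · exact hdiag i
  · exact hP.symm j i (hlt j i hij)

theorem metzler_spectrahedron_eq_subharmonic_general (n m : ℕ)
    (Q : Fin n → Matrix (Fin m) (Fin m) STrop)
    (hsymm : ∀ k, (Q k).IsSymm)
    (hMetzler : ∀ k, ∀ i j : Fin m, i ≠ j → posPart (Q k i j) = ⊥)
    (hmin : ∀ k : Fin n,
      (Finset.univ.filter fun p : Fin m × Fin m => isNegB (Q k p.1 p.2) = true).Nonempty)
    (F : (Fin n → EReal) → (Fin n → EReal))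
    (hF : ∀ (x : Fin n → EReal) (k : Fin n),
      F x k =
        (Finset.univ.filter fun p : Fin m × Fin m => isNegB (Q k p.1 p.2) = true).inf'
          (hmin k) (fun p =>
            -absPart (Q k p.1 p.2) +
              (((2 : ℝ)⁻¹ : ℝ) : EReal) *
                ((⨆ l, posPart (Q l p.1 p.1) + x l) + (⨆ l, posPart (Q l p.2 p.2) + x l))))
    (lam : ℝ) (x : Fin n → EReal) :
    ((∀ i : Fin m,
        (lam : EReal) + (⨆ l, negPart (Q l i i) + x l) ≤ ⨆ l, posPart (Q l i i) + x l) ∧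
      (∀ i j : Fin m, i < j →
        (lam : EReal) + (lam : EReal) + (⨆ l, absPart (Q l i j) + x l) +
            (⨆ l, absPart (Q l i j) + x l) ≤
          (⨆ l, posPart (Q l i i) + x l) + (⨆ l, posPart (Q l j j) + x l)))
    ↔ ∀ k, (lam : EReal) + x k ≤ F x k := by
  simp only [hF, Prod.forall,
    forall_coe_add_le_inf'_neg_absPart_add_iff (fun k (p : Fin m × Fin m) => Q k p.1 p.2)]
  refine ((forall_forall_iff_forall_diag_and_forall_lt ⟨fun i j h => ?_⟩).trans ?_).symm
  · simpa only [(hsymm _).apply i j, add_comm (⨆ l, posPart (Q l j j) + x l)] using h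
  refine and_congr (forall_congr' fun i => ?_)
    (forall₂_congr fun i j => forall_congr' fun hij => ?_)
  · rw [inv_two_mul_add_self]
  · simp only [absPart_eq_negPart_of_posPart_eq_bot (hMetzler _ i j hij.ne)]
    rw [← add_self_le_iff_le_inv_two_mul, add_add_add_comm, ← add_assoc]

/-- For symmetric tropical Metzler matrices `Q^{(1)},…,Q^{(n)}`
(satisfying the nonemptiness assumptions), the set `S_λ` described by the
shifted order-1 and order-2 tropical minor inequalities coincides with
`{x : λ + x ≤ F(x)}` where `F` is the Shapley operator of the associated
stochastic mean payoff game. -/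
theorem metzler_spectrahedron_eq_subharmonic (n m : ℕ)
    (Q : Fin n → Matrix (Fin m) (Fin m) STrop)
    (hsymm : ∀ k, (Q k).IsSymm)
    (hMetzler : ∀ k, ∀ i j : Fin m, i ≠ j → posPart (Q k i j) = ⊥)
    (hmin : ∀ k : Fin n,
      (Finset.univ.filter fun p : Fin m × Fin m => isNegB (Q k p.1 p.2) = true).Nonempty)
    (hmax : ∀ i : Fin m, ∃ k, posPart (Q k i i) ≠ ⊥)
    (F : (Fin n → EReal) → (Fin n → EReal))
    (hF : ∀ (x : Fin n → EReal) (k : Fin n),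
      F x k =
        (Finset.univ.filter fun p : Fin m × Fin m => isNegB (Q k p.1 p.2) = true).inf'
          (hmin k) (fun p =>
            -absPart (Q k p.1 p.2) +
              (((2 : ℝ)⁻¹ : ℝ) : EReal) *
                ((⨆ l, posPart (Q l p.1 p.1) + x l) + (⨆ l, posPart (Q l p.2 p.2) + x l))))
    (lam : ℝ) (x : Fin n → EReal) :
    ((∀ i : Fin m,
        (lam : EReal) + (⨆ l, negPart (Q l i i) + x l) ≤ ⨆ l, posPart (Q l i i) + x l) ∧
      (∀ i j : Fin m, i < j →
        (lam : EReal) + (lam : EReal) + (⨆ l, absPart (Q l i j) + x l) +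
            (⨆ l, absPart (Q l i j) + x l) ≤
          (⨆ l, posPart (Q l i i) + x l) + (⨆ l, posPart (Q l j j) + x l)))
    ↔ ∀ k, (lam : EReal) + x k ≤ F x k :=
  metzler_spectrahedron_eq_subharmonic_general n m Q hsymm hMetzler hmin F hF lam x
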